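/- For the synthesised monitor of a prefix contract: rej(q, ¬α.no + α.⟦p⟧) holds iff either q can perform, after some τ-steps, a visible action β ≠ α, or q can perform α (after τ-steps) reaching some q' with rej(q', ⟦p⟧). -/

import Mathlib

/-- Actions: names and co-names. -/
inductive Act : Type where
  | pos : Nat → Act
  | neg : Nat → Act
deriving DecidableEq

/-- Complementation (dual) of actions. -/
def Act.dual : Act → Act
  | .pos n => .neg n
  | .neg n => .pos n

/-- Server contracts. -/
inductive Srv : Type where
  | nil : Srv
  | pre : Act → Srv → Srv
  | ext : Srv → Srv → Srv
  | int : Srv → Srv → Srv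
deriving DecidableEq

/-- Client contracts (additionally with success `ok`). -/
inductive Cli : Type where
  | nil : Cli
  | ok : Cli
  | pre : Act → Cli → Cli
  | ext : Cli → Cli → Cli
  | int : Cli → Cli → Cli
deriving DecidableEq

/-- Server LTS; label `none` is the silent action τ. -/
inductive SStep : Srv → Option Act → Srv → Prop where
  | pre : ∀ (a : Act) (p : Srv), SStep (.pre a p) (some a) p
  | extL : ∀ {p ℓ p'} (q : Srv), SStep p ℓ p' → SStep (.ext p q) ℓ p'
  | extR : ∀ {q ℓ q'} (p : Srv), SStep q ℓ q' → SStep (.ext p q) ℓ q'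
  | intL : ∀ (p q : Srv), SStep (.int p q) none p
  | intR : ∀ (p q : Srv), SStep (.int p q) none q

/-- Client LTS; label `none` is τ.  `ok` and `nil` have no transitions. -/
inductive CStep : Cli → Option Act → Cli → Prop where
  | pre : ∀ (a : Act) (r : Cli), CStep (.pre a r) (some a) r
  | extL : ∀ {r ℓ r'} (s : Cli), CStep r ℓ r' → CStep (.ext r s) ℓ r'
  | extR : ∀ {s ℓ s'} (r : Cli), CStep s ℓ s' → CStep (.ext r s) ℓ s'
  | intL : ∀ (r s : Cli), CStep (.int r s) none r
  | intR : ∀ (r s : Cli), CStep (.int r s) none s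

/-- System τ-transitions for a client-server system `r ∥ p`. -/
inductive SysStep : Cli × Srv → Cli × Srv → Prop where
  | srv : ∀ {p p'} (r : Cli), SStep p none p' → SysStep (r, p) (r, p')
  | cli : ∀ {r r'} (p : Srv), CStep r none r' → SysStep (r, p) (r', p)
  | syn : ∀ {r r' p p' a}, CStep r (some (Act.dual a)) r' → SStep p (some a) p' →
      SysStep (r, p) (r', p')

/-- `Sat p r`: every maximal computation from `r ∥ p` is successful. -/
def Sat (p : Srv) (r : Cli) : Prop :=
  ∀ s q, Relation.ReflTransGen SysStep (r, p) (s, q) →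
    (¬ ∃ x, SysStep (s, q) x) → s = Cli.ok

/-- The server (subcontract) preorder. -/
def SrvPre (p q : Srv) : Prop := ∀ r, Sat p r → Sat q r

/-- Monitor verdicts: acceptance, rejection, inconclusive. -/
inductive Verd : Type where
  | yes : Verd
  | no : Verd
  | stp : Verd
deriving DecidableEq

/-- Monitors. -/
inductive Mon : Type where
  | verd : Verd → Mon
  | act : Act → Mon → Mon
  | nact : Act → Mon → Mon
  | choice : Mon → Mon → Mon
  | conj : Mon → Mon → Mon
deriving DecidableEq

/-- Monitor LTS (on visible actions only); verdicts persist. -/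
inductive MStep : Mon → Act → Mon → Prop where
  | verd : ∀ (v : Verd) (a : Act), MStep (.verd v) a (.verd v)
  | act : ∀ (a : Act) (m : Mon), MStep (.act a m) a m
  | nact : ∀ {b a : Act} (m : Mon), b ≠ a → MStep (.nact a m) b m
  | chL : ∀ {m a m'} (n : Mon), MStep m a m' → MStep (.choice m n) a m'
  | chR : ∀ {n a n'} (m : Mon), MStep n a n' → MStep (.choice m n) a n'
  | conj : ∀ {m a m' n n'}, MStep m a m' → MStep n a n' →
      MStep (.conj m n) a (.conj m' n')

/-- Instrumentation of a monitor over a server: `m ◁ p`. -/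
inductive IStep : Mon × Srv → Option Act → Mon × Srv → Prop where
  | mon : ∀ {m p a m' p'}, SStep p (some a) p' → MStep m a m' →
      IStep (m, p) (some a) (m', p')
  | ter : ∀ {m p a p'}, SStep p (some a) p' → (¬ ∃ m', MStep m a m') →
      IStep (m, p) (some a) (.verd .stp, p')
  | asy : ∀ {p p'} (m : Mon), SStep p none p' → IStep (m, p) none (m, p')

/-- Reachability along monitored computations. -/
def IReach : Mon × Srv → Mon × Srv → Prop :=
  Relation.ReflTransGen (fun x y => ∃ ℓ, IStep x ℓ y)

/-- Rejecting monitor states: conjunctions `no × ⋯ × no` (incl. the single `no`). -/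
inductive IsRej : Mon → Prop where
  | no : IsRej (.verd .no)
  | conj : ∀ {m n}, IsRej m → IsRej n → IsRej (.conj m n)

/-- `Rej p m`: some monitored computation from `m ◁ p` reaches a rejecting state. -/
def Rej (p : Srv) (m : Mon) : Prop :=
  ∃ m' p', IReach (m, p) (m', p') ∧ IsRej m'

/-- Monitor synthesis from a server specification. -/
def synth : Srv → Mon
  | .nil => .verd .stp
  | .pre a p => .choice (.nact a (.verd .no)) (.act a (synth p))
  | .ext p q => .conj (synth p) (synth q)
  | .int p q => .conj (synth p) (synth q)

/-- Traces (finite sequences of visible actions) of a server. -/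
inductive STrace : Srv → List Act → Prop where
  | nil : ∀ (p : Srv), STrace p []
  | tau : ∀ {p p' t}, SStep p none p' → STrace p' t → STrace p t
  | act : ∀ {p a p' t}, SStep p (some a) p' → STrace p' t → STrace p (a :: t)

/-- Traces of a monitored system. -/
inductive ITrace : Mon × Srv → List Act → Prop where
  | nil : ∀ (x : Mon × Srv), ITrace x []
  | tau : ∀ {x y t}, IStep x none y → ITrace y t → ITrace x t
  | act : ∀ {x a y t}, IStep x (some a) y → ITrace y t → ITrace x (a :: t)

/-- Weak visible transition: τ-steps followed by a visible action. -/
def WAct (p : Srv) (a : Act) (p' : Srv) : Prop :=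
  ∃ p₀, Relation.ReflTransGen (fun x y => SStep x none y) p p₀ ∧ SStep p₀ (some a) p'

lemma IReach.of_tauSteps (m : Mon) {q q₀ : Srv}
    (h : Relation.ReflTransGen (fun x y => SStep x none y) q q₀) :
    IReach (m, q) (m, q₀) :=
  h.lift (fun q => (m, q)) fun _ _ hs => ⟨none, IStep.asy m hs⟩

lemma IReach.of_wAct {m n : Mon} {q q' : Srv} {a : Act} (hq : WAct q a q') (hm : MStep m a n) :
    IReach (m, q) (n, q') :=
  let ⟨_, hτ, hs⟩ := hq
  (IReach.of_tauSteps m hτ).tail ⟨some a, IStep.mon hs hm⟩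

lemma Rej.of_wAct {m n : Mon} {q q' : Srv} {a : Act} (hq : WAct q a q') (hm : MStep m a n)
    (hrej : Rej q' n) : Rej q m :=
  let ⟨m', q'', hreach, hm'⟩ := hrej
  ⟨m', q'', (IReach.of_wAct hq hm).trans hreach, hm'⟩

/-- Server τ-steps leave the monitor unchanged, and a monitor that can follow every action is
never replaced by `end`; so the first change of such a monitor is a weak visible step it follows. -/
lemma IReach.exists_wAct_of_ne {m m' : Mon} {q q' : Srv} (h : IReach (m, q) (m', q'))
    (hne : m' ≠ m) (htotal : ∀ a, ∃ n, MStep m a n) :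
    ∃ a n q₁, MStep m a n ∧ WAct q a q₁ ∧ IReach (n, q₁) (m', q') := by
  generalize hz : (m, q) = z at h
  induction h using Relation.ReflTransGen.head_induction_on generalizing q with
  | refl => cases hz; exact absurd rfl hne
  | head hstep htail ih =>
    subst hz
    obtain ⟨ℓ, hstep⟩ := hstep
    cases hstep with
    | mon hs hm => exact ⟨_, _, _, hm, ⟨q, .refl, hs⟩, htail⟩
    | ter _ hstuck => exact absurd (htotal _) hstuck
    | asy _ hs =>
      obtain ⟨a, n, q₁, hm, ⟨q₂, hτ, ha⟩, hreach⟩ := ih rfl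
      exact ⟨a, n, q₁, hm, ⟨q₂, .head hs hτ, ha⟩, hreach⟩

lemma MStep.prefixMonitor_total (α : Act) (m : Mon) (a : Act) :
    ∃ n, MStep (.choice (.nact α (.verd .no)) (.act α m)) a n := by
  by_cases h : a = α
  · subst h
    exact ⟨m, .chR _ (.act a m)⟩
  · exact ⟨.verd .no, .chL _ (.nact _ h)⟩

/-- Characterisation of rejection for the synthesised monitor of a prefix contract. -/
theorem rej_prefix_monitor (α : Act) (p q : Srv) :
    Rej q (.choice (.nact α (.verd .no)) (.act α (synth p))) ↔
      (∃ (β : Act) (q' : Srv), β ≠ α ∧ WAct q β q') ∨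
      (∃ q' : Srv, WAct q α q' ∧ Rej q' (synth p)) := by
  constructor
  · rintro ⟨m', q', hreach, hrej⟩
    have hne : m' ≠ .choice (.nact α (.verd .no)) (.act α (synth p)) := by
      rintro rfl
      cases hrej
    obtain ⟨β, n, q₁, hm, hβ, hreach'⟩ :=
      hreach.exists_wAct_of_ne hne (MStep.prefixMonitor_total α (synth p))
    cases hm with
    | chL _ hm => cases hm with
      | nact _ hβα => exact .inl ⟨β, q₁, hβα, hβ⟩
    | chR _ hm => cases hm with
      | act => exact .inr ⟨q₁, hβ, m', q', hreach', hrej⟩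
  · rintro (⟨β, q', hβα, hβ⟩ | ⟨q', hα, hrej⟩)
    · exact Rej.of_wAct hβ (.chL _ (.nact _ hβα)) ⟨_, _, .refl, .no⟩
    · exact Rej.of_wAct hα (.chR _ (.act α _)) hrej
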